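/- In the free bialgebra B = k⟨g,x⟩, the iterated comultiplication Δ^{(n+1)} applied to C_{p,q} equals the sum over all tuples (k_1,...,k_n) of nonnegative integers with k_1+···+k_n ≤ q of C_{p+k_1+···+k_n, q-(k_1+···+k_n)} ⊗ C_{p+k_1+···+k_{n-1}, k_n} ⊗ ··· ⊗ C_{p+k_1, k_2} ⊗ C_{p, k_1}. -/

import Mathlib

/-! Let `W(n, a)` be the sum of the words of length `n` with `a` letters `g`. Splitting off the
first letter gives `W(n+1, a) = g W(n, a-1) + x W(n, a)`, and since `Δ` is multiplicative with
`Δ g = g ⊗ g`, `Δ x = x ⊗ 1 + g ⊗ x`, induction on `n` yields `Δ W(n, p) = ∑_j W(n, j) ⊗ W(j, p)`,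
that is `Δ C_{p,q} = ∑_{k ≤ q} C_{p+k,q-k} ⊗ C_{p,k}`. Since `Δ^{(n+2)} = (Δ^{(n+1)} ⊗ id) ∘ Δ`,
this splits off the last factor `C_{p,k_1}` and leaves `Δ^{(n+1)} C_{p+k_1,q-k_1}`, which is
expanded by induction on `n`. -/

open FreeAlgebra

variable (kk : Type) [Field kk]

/-- The free algebra `B = k⟨g,x⟩` on two generators. -/
abbrev FreeBi (kk : Type) [Field kk] := FreeAlgebra kk (Fin 2)

/-- The generator `g`. -/
noncomputable def gB : FreeBi kk := FreeAlgebra.ι kk 0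

/-- The generator `x`. -/
noncomputable def xB : FreeBi kk := FreeAlgebra.ι kk 1

/-- The monomial (word) associated to a function `f : Fin n → Fin 2`. -/
noncomputable def wordB {n : ℕ} (f : Fin n → Fin 2) : FreeBi kk :=
  (List.ofFn fun i => FreeAlgebra.ι kk (f i)).prod

/-- `CB a b` is the sum of all monomials with `a` occurrences of `g` and `b`
occurrences of `x`. -/
noncomputable def CB (a b : ℕ) : FreeBi kk :=
  ∑ f ∈ Finset.univ.filter
      (fun f : Fin (a + b) → Fin 2 => (Finset.univ.filter (fun i => f i = 0)).card = a),
    wordB kk f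

open TensorProduct in
/-- The comultiplication of the free bialgebra, determined by
`Δ(g) = g ⊗ g` and `Δ(x) = x ⊗ 1 + g ⊗ x`. -/
noncomputable def DeltaB : FreeBi kk →ₐ[kk] FreeBi kk ⊗[kk] FreeBi kk :=
  FreeAlgebra.lift kk
    (fun i => if i = 0 then gB kk ⊗ₜ[kk] gB kk else xB kk ⊗ₜ[kk] 1 + gB kk ⊗ₜ[kk] xB kk)

open TensorProduct PiTensorProduct in
/-- The iterated comultiplication `Δ^{(n)} : B → B^{⊗ n}` (here indexed so that
`DI n = Δ^{(n+1)}`), defined by `Δ^{(1)} = id` and `Δ^{(n+1)} = (Δ^{(n)} ⊗ id) ∘ Δ`,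
valued in the `PiTensorProduct`. -/
noncomputable def DI : (n : ℕ) → FreeBi kk →ₗ[kk] ⨂[kk] (_ : Fin (n + 1)), FreeBi kk
  | 0 => (PiTensorProduct.subsingletonEquiv (R := kk) (s := fun _ : Fin 1 => FreeBi kk)
      (0 : Fin 1)).symm.toLinearMap
  | (n + 1) =>
      (PiTensorProduct.reindex kk (fun _ : Fin (n + 1) ⊕ Fin 1 => FreeBi kk)
          finSumFinEquiv).toLinearMap ∘ₗ
        (PiTensorProduct.tmulEquiv kk (FreeBi kk)).toLinearMap ∘ₗ
          (TensorProduct.map (DI n)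
            (PiTensorProduct.subsingletonEquiv (0 : Fin 1)).symm.toLinearMap) ∘ₗ
            (DeltaB kk).toLinearMap

/-- `partialSum K m = k_1 + ⋯ + k_m` for a tuple `K = (k_1, …, k_n)`. -/
def partialSum {n : ℕ} (K : Fin n → ℕ) (m : ℕ) : ℕ :=
  ∑ t : Fin n, if (t : ℕ) < m then K t else 0

/-- The `i`-th tensor factor in the expansion of `Δ^{(n+1)}(C_{p,q})`:
the leftmost (i = 0) factor is `C_{p+k_1+⋯+k_n, q-(k_1+⋯+k_n)}` and the factor at
position `i ≥ 1` is `C_{p+k_1+⋯+k_{n-i}, k_{n-i+1}}` (so the rightmost is `C_{p,k_1}`). -/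
noncomputable def DIfactor (p : ℕ) (q : ℕ) {n : ℕ} (K : Fin n → ℕ) (i : Fin (n + 1)) :
    FreeBi kk :=
  if h : (i : ℕ) = 0 then CB kk (p + partialSum K n) (q - partialSum K n)
  else CB kk (p + partialSum K (n - (i : ℕ))) (K ⟨n - (i : ℕ), by omega⟩)

open Finset TensorProduct

/-- `wordSum kk n a` is `C_{a,n-a}` when `a ≤ n` and `0` when `a > n`; indexing by the length
makes the recursion on the first letter uniform. -/
noncomputable def wordSum (n a : ℕ) : FreeBi kk :=
  ∑ f ∈ univ.filter (fun f : Fin n → Fin 2 => #{i | f i = 0} = a), wordB kk f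

theorem CB_eq_wordSum (a b : ℕ) : CB kk a b = wordSum kk (a + b) a := rfl

theorem wordSum_of_lt {n a : ℕ} (h : n < a) : wordSum kk n a = 0 := by
  refine sum_eq_zero fun f hf => absurd (mem_filter.mp hf).2 ?_
  have := card_le_univ (univ.filter fun i => f i = 0)
  simp only [Fintype.card_fin] at this
  omega

theorem wordSum_zero_zero : wordSum kk 0 0 = 1 := by
  simp [wordSum, wordB]

theorem wordB_cons {n : ℕ} (c : Fin 2) (t : Fin n → Fin 2) :
    wordB kk (Fin.cons c t) = FreeAlgebra.ι kk c * wordB kk t := by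
  simp [wordB, List.ofFn_succ]

theorem card_filter_cons_eq_zero {n : ℕ} (c : Fin 2) (t : Fin n → Fin 2) :
    #{i | (Fin.cons c t : Fin (n + 1) → Fin 2) i = 0}
      = (if c = 0 then 1 else 0) + #{i | t i = 0} := by
  rw [Fin.card_filter_univ_succ']
  simp

theorem sum_fin_succ_pi {α M : Type*} [Fintype α] [AddCommMonoid M] {n : ℕ}
    (F : (Fin (n + 1) → α) → M) : ∑ f, F f = ∑ c, ∑ t, F (Fin.cons c t) := by
  rw [← (Fin.consEquiv fun _ => α).sum_comp, Fintype.sum_prod_type]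
  rfl

theorem wordSum_succ (n a : ℕ) :
    wordSum kk (n + 1) a =
      (if a = 0 then 0 else gB kk * wordSum kk n (a - 1)) + xB kk * wordSum kk n a := by
  rw [wordSum, sum_filter, sum_fin_succ_pi, Fin.sum_univ_two]
  simp only [wordB_cons, card_filter_cons_eq_zero, wordSum, mul_sum, sum_filter, mul_ite, mul_zero,
    ↓reduceIte, Fin.one_eq_zero_iff, OfNat.ofNat_ne_one, zero_add]
  congr 1
  split_ifs
  · exact sum_eq_zero fun t _ => if_neg (by omega)
  · exact sum_congr rfl fun t _ => if_congr (by omega) rfl rfl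

theorem DeltaB_gB : DeltaB kk (gB kk) = gB kk ⊗ₜ[kk] gB kk := by
  simp [DeltaB, gB]

theorem DeltaB_xB : DeltaB kk (xB kk) = xB kk ⊗ₜ[kk] 1 + gB kk ⊗ₜ[kk] xB kk := by
  simp [DeltaB, xB]

theorem DeltaB_wordSum (n p : ℕ) :
    DeltaB kk (wordSum kk n p) = ∑ j ∈ range (n + 1), wordSum kk n j ⊗ₜ[kk] wordSum kk j p := by
  induction n generalizing p with
  | zero => cases p <;> simp [wordSum_zero_zero, wordSum_of_lt, Algebra.TensorProduct.one_def]
  | succ n ih =>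
    have h_x : ∑ j ∈ range (n + 2), (xB kk * wordSum kk n j) ⊗ₜ[kk] wordSum kk j p
        = (xB kk ⊗ₜ[kk] 1) * DeltaB kk (wordSum kk n p) := by
      rw [ih, mul_sum, sum_range_succ, wordSum_of_lt kk n.lt_succ_self]
      simp [Algebra.TensorProduct.tmul_mul_tmul]
    have h_g : ∑ j ∈ range (n + 2),
          (if j = 0 then 0 else gB kk * wordSum kk n (j - 1)) ⊗ₜ[kk] wordSum kk j p
        = (if p = 0 then 0 else (gB kk ⊗ₜ[kk] gB kk) * DeltaB kk (wordSum kk n (p - 1)))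
          + (gB kk ⊗ₜ[kk] xB kk) * DeltaB kk (wordSum kk n p) := by
      rw [sum_range_succ']
      simp only [Nat.succ_ne_zero, ↓reduceIte, add_tsub_cancel_right, zero_tmul, add_zero,
        wordSum_succ kk _ p]
      rcases p with _ | p <;>
        simp [ih, mul_sum, Algebra.TensorProduct.tmul_mul_tmul, tmul_add, sum_add_distrib]
    calc DeltaB kk (wordSum kk (n + 1) p)
        = (if p = 0 then 0 else (gB kk ⊗ₜ[kk] gB kk) * DeltaB kk (wordSum kk n (p - 1)))
          + (gB kk ⊗ₜ[kk] xB kk) * DeltaB kk (wordSum kk n p)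
          + (xB kk ⊗ₜ[kk] 1) * DeltaB kk (wordSum kk n p) := by
          rw [wordSum_succ]
          split_ifs <;>
            simp only [map_add, map_mul, map_zero, DeltaB_gB, DeltaB_xB, add_mul] <;> abel
      _ = _ := by
        rw [← h_g, ← h_x, ← sum_add_distrib]
        simp only [wordSum_succ kk n, add_tmul]

theorem DeltaB_CB (p q : ℕ) :
    DeltaB kk (CB kk p q) = ∑ k ∈ range (q + 1), CB kk (p + k) (q - k) ⊗ₜ[kk] CB kk p k := by
  rw [CB_eq_wordSum, DeltaB_wordSum, add_assoc, sum_range_add,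
    sum_eq_zero fun j hj => by rw [wordSum_of_lt kk (mem_range.mp hj), tmul_zero], zero_add]
  refine sum_congr rfl fun k hk => ?_
  have hkq := mem_range.mp hk
  rw [CB_eq_wordSum, CB_eq_wordSum, show p + k + (q - k) = p + q by omega]

def boundedTuples (n q : ℕ) : Finset (Fin n → ℕ) :=
  (Fintype.piFinset fun _ : Fin n => range (q + 1)).filter fun K => ∑ m, K m ≤ q

theorem mem_boundedTuples {n q : ℕ} {K : Fin n → ℕ} : K ∈ boundedTuples n q ↔ ∑ m, K m ≤ q := by
  simp only [boundedTuples, mem_filter, Fintype.mem_piFinset, mem_range, and_iff_right_iff_imp]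
  exact fun h m =>
    Nat.lt_succ_of_le ((single_le_sum (fun _ _ => Nat.zero_le _) (mem_univ m)).trans h)

theorem boundedTuples_zero (q : ℕ) : boundedTuples 0 q = {Fin.elim0} :=
  eq_singleton_iff_unique_mem.mpr
    ⟨mem_boundedTuples.mpr (by simp), fun _ _ => Subsingleton.elim _ _⟩

theorem sum_boundedTuples_succ {M : Type*} [AddCommMonoid M] (n q : ℕ)
    (F : (Fin (n + 1) → ℕ) → M) :
    ∑ K ∈ boundedTuples (n + 1) q, F K
      = ∑ k ∈ range (q + 1), ∑ K ∈ boundedTuples n (q - k), F (Fin.cons k K) := by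
  rw [← sum_finset_product'
    ((boundedTuples (n + 1) q).map (Fin.consEquiv fun _ => ℕ).symm.toEmbedding) _ _ fun x => ?_,
    sum_map]
  · simp
  · simp only [mem_map_equiv, Equiv.symm_symm, mem_boundedTuples, mem_range]
    rw [Fin.sum_univ_succ]
    change x.1 + ∑ m, x.2 m ≤ q ↔ _
    omega

theorem partialSum_zero {n : ℕ} (K : Fin n → ℕ) : partialSum K 0 = 0 := by
  simp [partialSum]

theorem partialSum_cons_succ {n : ℕ} (k : ℕ) (K : Fin n → ℕ) (m : ℕ) :
    partialSum (Fin.cons k K) (m + 1) = k + partialSum K m := by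
  simp [partialSum, Fin.sum_univ_succ]

theorem DIfactor_cons (p q k : ℕ) {n : ℕ} (K : Fin n → ℕ) :
    DIfactor kk p q (Fin.cons k K) = Fin.snoc (DIfactor kk (p + k) (q - k) K) (CB kk p k) := by
  funext i
  induction i using Fin.lastCases with
  | last => simp [DIfactor, partialSum_zero]
  | cast j =>
    rw [Fin.snoc_castSucc]
    unfold DIfactor
    rcases eq_or_ne (j : ℕ) 0 with hj | hj
    · simp [hj, partialSum_cons_succ, add_assoc, Nat.sub_sub]
    · have : n + 1 - j = (n - j) + 1 := by omega
      simp only [Fin.val_castSucc, hj, this, partialSum_cons_succ, add_assoc, dite_false]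
      exact congrArg _ (Fin.cons_succ (α := fun _ => ℕ) k K ⟨n - j, by omega⟩)

open PiTensorProduct in
theorem reindex_finSumFinEquiv_tmulEquiv_tprod {R M : Type*} [CommSemiring R] [AddCommMonoid M]
    [Module R M] {n : ℕ} (a : Fin n → M) (b : M) :
    reindex R (fun _ => M) finSumFinEquiv
        (tmulEquiv R M (tprod R a ⊗ₜ[R] tprod R fun _ : Fin 1 => b))
      = PiTensorProduct.tprod R (Fin.snoc a b) := by
  rw [tmulEquiv_apply, reindex_tprod]
  congr 1
  funext i
  induction i using Fin.lastCases <;> simp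

theorem DI_zero_apply (y : FreeBi kk) : DI kk 0 y = PiTensorProduct.tprod kk fun _ => y := by
  simp [DI]

open TensorProduct PiTensorProduct in
/-- `Δ^{(n+1)}(C_{p,q}) = Σ_{k_1+⋯+k_n ≤ q}
`C_{p+k_1+⋯+k_n,q-(k_1+⋯+k_n)} ⊗ C_{p+k_1+⋯+k_{n-1},k_n} ⊗ ⋯ ⊗ C_{p+k_1,k_2} ⊗ C_{p,k_1}`. -/
theorem DI_CB (n p q : ℕ) :
    DI kk n (CB kk p q) =
      ∑ K ∈ (Fintype.piFinset fun _ : Fin n => Finset.range (q + 1)).filter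
          (fun K => ∑ m, K m ≤ q),
        PiTensorProduct.tprod kk (DIfactor kk p q K) := by
  change _ = ∑ K ∈ boundedTuples n q, _
  induction n generalizing p q with
  | zero =>
    rw [boundedTuples_zero, sum_singleton, DI_zero_apply]
    congr 1
    funext i
    simp [DIfactor, partialSum_zero]
  | succ n ih =>
    simp only [DI, LinearMap.comp_apply, LinearEquiv.coe_coe, AlgHom.toLinearMap_apply, DeltaB_CB,
      map_sum, map_tmul, ih, sum_tmul, sum_boundedTuples_succ, DIfactor_cons,
      subsingletonEquiv_symm_apply', reindex_finSumFinEquiv_tmulEquiv_tprod]
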